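/- arXiv:2102.07002 — 9 statements merged into one kernel-verified Lean document; each statement's English description precedes it below -/
import Mathlib

section
/- Let f : ℝ^T → ℝ be defined by f(x) = max_{i ∈ [T+1]} ⟨h_i, x⟩ with the vectors h_i as in the context (with coefficients a_j > 0 and b_j > 0). Then the infimum of f over ℝ^T equals 0. -/
/- STATEMENT 0: the function f(x) = max_{i ∈ [T+1]} ⟨h_i, x⟩ built from the coefficients
   a_j = L(1-β)/(8(T-j+1)), b_j = L j^α/(2 T^α) has infimum 0 over ℝ^T.
   Vectors in ℝ^T are indexed by `Fin T`, where the coordinate `j : Fin T` corresponds to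
   the 1-based index `j+1`; the index `i` of the vectors `h_i` is a 1-based natural number
   ranging over [1, T+1]. -/
theorem stmt_0
    (T : ℕ) (hT : 1 ≤ T) (L β α : ℝ)
    (hL : 0 < L) (hβ0 : 0 ≤ β) (hβ1 : β < 1) (hα0 : 0 ≤ α) (hα2 : α ≤ 1 / 2)
    (a b : ℕ → ℝ)
    (hb : ∀ j : ℕ, b j = L * (j : ℝ) ^ α / (2 * (T : ℝ) ^ α))
    (ha : ∀ j : ℕ, a j = L * (1 - β) / (8 * ((T : ℝ) - (j : ℝ) + 1)))
    (h : ℕ → Fin T → ℝ)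
    (hh : ∀ (i : ℕ) (j : Fin T), h i j =
      if (j : ℕ) + 1 < i then a ((j : ℕ) + 1)
      else if (j : ℕ) + 1 = i then -(b ((j : ℕ) + 1)) else 0)
    (f : (Fin T → ℝ) → ℝ)
    (hf : ∀ x, f x = (Finset.Icc 1 (T + 1)).sup'
      (Finset.nonempty_Icc.2 (by omega)) (fun i => ∑ j, h i j * x j)) :
    IsGLB (Set.range f) 0 := by
  have hbpos : ∀ j : ℕ, 1 ≤ j → 0 < b j := by
    intro j hj
    rw [hb]
    have h1 : (0:ℝ) < (j:ℝ) ^ α := Real.rpow_pos_of_pos (by exact_mod_cast hj) α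
    have h2 : (0:ℝ) < (T:ℝ) ^ α := Real.rpow_pos_of_pos (by exact_mod_cast hT) α
    positivity
  have hapos : ∀ j : ℕ, j ≤ T → 0 < a j := by
    intro j hj
    rw [ha]
    have h1 : (0:ℝ) < (T:ℝ) - (j:ℝ) + 1 := by
      have : (j:ℝ) ≤ (T:ℝ) := by exact_mod_cast hj
      linarith
    have h2 : (0:ℝ) < 1 - β := by linarith
    positivity
  have hf0 : f 0 = 0 := by
    rw [hf]
    simp
  have key : ∀ x : Fin T → ℝ, 0 ≤ f x := by
    intro x
    rw [hf]
    by_contra hneg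
    push_neg at hneg
    have hglt : ∀ i ∈ Finset.Icc 1 (T+1), (∑ j, h i j * x j) < 0 := by
      intro i hi
      exact lt_of_le_of_lt (Finset.le_sup' (fun i => ∑ j : Fin T, h i j * x j) hi) hneg
    set S : ℕ → ℝ := fun k => ∑ j : Fin T,
      (if (j:ℕ)+1 < k then a ((j:ℕ)+1) * x j else 0) with hSdef
    have hS : ∀ k, 1 ≤ k → k ≤ T + 1 → 0 ≤ S k := by
      intro k hk1
      induction k, hk1 using Nat.le_induction with
      | base =>
        intro _
        simp [hSdef]
      | succ k hk ih =>
        intro hk2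
        have hkT : k ≤ T := by omega
        have ihk := ih (by omega)
        have hkT' : k - 1 < T := by omega
        set jk : Fin T := ⟨k-1, hkT'⟩ with hjk
        have hg := hglt k (Finset.mem_Icc.mpr ⟨hk, by omega⟩)
        have hgk : (∑ j, h k j * x j) = S k - b k * x jk := by
          have hterm : ∀ j : Fin T, h k j * x j =
              (if (j:ℕ)+1 < k then a ((j:ℕ)+1) * x j else 0) +
              (if j = jk then -(b k) * x j else 0) := by
            intro j
            rw [hh]
            rcases lt_trichotomy ((j:ℕ)+1) k with h1 | h1 | h1
            · have hne : j ≠ jk := by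
                intro hjeq
                apply absurd h1
                simp only [hjeq, hjk]
                omega
              simp [h1, hne, Nat.ne_of_lt h1]
            · have heq : j = jk := by
                apply Fin.ext
                simp [hjk]; omega
              have : ¬ ((j:ℕ)+1 < k) := by omega
              rw [if_neg this, if_pos h1, if_neg this, if_pos heq]
              have hbb : b ((j:ℕ)+1) = b k := by rw [h1]
              rw [hbb]; ring
            · have hne : j ≠ jk := by
                intro hjeq
                apply absurd h1
                simp only [hjeq, hjk]
                omega
              have h2 : ¬ ((j:ℕ)+1 < k) := by omega
              have h3 : (j:ℕ)+1 ≠ k := by omega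
              simp [h2, h3, hne]
          rw [Finset.sum_congr rfl (fun j _ => hterm j), Finset.sum_add_distrib]
          simp [hSdef]
          ring
        rw [hgk] at hg
        have hx : 0 ≤ x jk := by nlinarith [hbpos k hk]
        have hstep : S (k+1) = S k + a k * x jk := by
          have hterm : ∀ j : Fin T,
              (if (j:ℕ)+1 < k+1 then a ((j:ℕ)+1) * x j else 0) =
              (if (j:ℕ)+1 < k then a ((j:ℕ)+1) * x j else 0) +
              (if j = jk then a k * x j else 0) := by
            intro j
            rcases lt_trichotomy ((j:ℕ)+1) k with h1 | h1 | h1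
            · have hne : j ≠ jk := by
                intro hjeq
                apply absurd h1
                simp only [hjeq, hjk]
                omega
              have : (j:ℕ)+1 < k+1 := by omega
              simp [h1, hne, this]
            · have heq : j = jk := by
                apply Fin.ext
                simp [hjk]; omega
              have h2 : ¬ ((j:ℕ)+1 < k) := by omega
              have h3 : (j:ℕ)+1 < k+1 := by omega
              rw [if_pos h3, if_neg h2, if_pos heq]
              have haa : a ((j:ℕ)+1) = a k := by rw [h1]
              rw [haa]; ring
            · have hne : j ≠ jk := by
                intro hjeq
                apply absurd h1
                simp only [hjeq, hjk]
                omega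
              have h2 : ¬ ((j:ℕ)+1 < k) := by omega
              have h3 : ¬ ((j:ℕ)+1 < k+1) := by omega
              simp [h2, h3, hne]
          have hs1 : S (k+1) = ∑ j : Fin T,
              ((if (j:ℕ)+1 < k then a ((j:ℕ)+1) * x j else 0) +
               (if j = jk then a k * x j else 0)) :=
            Finset.sum_congr rfl (fun j _ => hterm j)
          rw [hs1, Finset.sum_add_distrib]
          simp [hSdef]
        rw [hstep]
        have := mul_nonneg (hapos k hkT).le hx
        linarith
    have hlast : (∑ j, h (T+1) j * x j) = S (T+1) := by
      apply Finset.sum_congr rfl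
      intro j _
      have h1 : (j:ℕ)+1 < T+1 := by omega
      rw [hh, if_pos h1, if_pos h1]
    have hg := hglt (T+1) (Finset.mem_Icc.mpr ⟨by omega, le_refl _⟩)
    rw [hlast] at hg
    have := hS (T+1) (by omega) (le_refl _)
    linarith
  constructor
  · rintro y ⟨x, rfl⟩
    exact key x
  · intro w hw
    have : w ≤ f 0 := hw ⟨0, rfl⟩
    rwa [hf0] at this
end

section
/- For any integers 1 ≤ j ≤ t ≤ T and any real 0 < α ≤ 1/2, it holds that (1/(T−j+1)) · Σ_{k=j+1}^{t} k^{−α} ≤ 2/T^α. -/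
/-!
By Bernoulli's inequality `(1 - 1/x)^(1-α) ≤ 1 - (1-α)/x`, the increments of `x ↦ x^(1-α)` satisfy
`(1-α) x^(-α) ≤ x^(1-α) - (x-1)^(1-α)`, so the sum telescopes to
`(1-α) ∑_{k=j+1}^{t} k^(-α) ≤ t^(1-α) - j^(1-α) ≤ T^(1-α) - j^(1-α) ≤ (T-j) T^(-α)`,
and `1 - α ≥ 1/2` gives the factor `2`.
-/

open Finset Real

lemma rpow_one_sub_eq_mul {x α : ℝ} (hx : 0 ≤ x) (hα : α ≠ 1) : x ^ (1 - α) = x * x ^ (-α) := by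
  rw [sub_eq_add_neg, rpow_add' hx (by contrapose! hα; linarith), rpow_one]

lemma one_sub_mul_rpow_neg_le_rpow_one_sub_sub {x α : ℝ} (hx : 1 ≤ x) (hα0 : 0 ≤ α)
    (hα1 : α ≤ 1) : (1 - α) * x ^ (-α) ≤ x ^ (1 - α) - (x - 1) ^ (1 - α) := by
  have hx0 : 0 < x := one_pos.trans_le hx
  have hinv : x⁻¹ ≤ 1 := inv_le_one_of_one_le₀ hx
  have hbernoulli : (1 + -x⁻¹) ^ (1 - α) ≤ 1 + (1 - α) * -x⁻¹ :=
    rpow_one_add_le_one_add_mul_self (by linarith) (by linarith) (by linarith)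
  have hfactor : (x - 1) ^ (1 - α) = x ^ (1 - α) * (1 + -x⁻¹) ^ (1 - α) := by
    rw [← mul_rpow hx0.le (by linarith)]
    congr 1
    field_simp
    ring
  have hdiv : x ^ (1 - α) * x⁻¹ = x ^ (-α) := by
    rw [← div_eq_mul_inv, ← rpow_sub_one hx0.ne']
    ring_nf
  calc (1 - α) * x ^ (-α) = x ^ (1 - α) - x ^ (1 - α) * (1 + (1 - α) * -x⁻¹) := by
        rw [← hdiv]; ring
    _ ≤ x ^ (1 - α) - (x - 1) ^ (1 - α) := by
        rw [hfactor]
        gcongr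

lemma one_sub_mul_sum_Icc_rpow_neg_le {α : ℝ} (hα0 : 0 ≤ α) (hα1 : α ≤ 1) {j t : ℕ}
    (hjt : j ≤ t) :
    (1 - α) * ∑ k ∈ Icc (j + 1) t, (k : ℝ) ^ (-α) ≤ (t : ℝ) ^ (1 - α) - (j : ℝ) ^ (1 - α) := by
  rw [← Ico_add_one_right_eq_Icc, ← sum_Ico_add' (fun k : ℕ => (k : ℝ) ^ (-α)) j t 1, mul_sum,
    ← sum_Ico_sub (fun k : ℕ => (k : ℝ) ^ (1 - α)) hjt]
  gcongr with i
  simpa using one_sub_mul_rpow_neg_le_rpow_one_sub_sub (x := (i : ℝ) + 1) (by simp) hα0 hα1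

lemma rpow_one_sub_sub_rpow_one_sub_le {a b α : ℝ} (ha : 0 ≤ a) (hab : a ≤ b) (hα0 : 0 ≤ α)
    (hα1 : α ≠ 1) : b ^ (1 - α) - a ^ (1 - α) ≤ (b - a) * b ^ (-α) := by
  have hmono : a * b ^ (-α) ≤ a * a ^ (-α) := by
    rcases ha.eq_or_lt with rfl | ha
    · simp
    · exact mul_le_mul_of_nonneg_left (rpow_le_rpow_of_nonpos ha hab (by linarith)) ha.le
  rw [rpow_one_sub_eq_mul ha hα1, rpow_one_sub_eq_mul (ha.trans hab) hα1]
  linarith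

theorem stmt_2_general
    (T j t : ℕ) (hjt : j ≤ t) (htT : t ≤ T)
    (α : ℝ) (hα0 : 0 < α) (hα : α ≤ 1 / 2) :
    (1 / ((T : ℝ) - (j : ℝ) + 1)) * ∑ k ∈ Finset.Icc (j + 1) t, ((k : ℝ)) ^ (-α)
      ≤ 2 / (T : ℝ) ^ α := by
  have hjT : (j : ℝ) ≤ T := by exact_mod_cast hjt.trans htT
  have htT' : (t : ℝ) ≤ T := by exact_mod_cast htT
  set S := ∑ k ∈ Icc (j + 1) t, (k : ℝ) ^ (-α)
  have hS : (1 - α) * S ≤ (T - j) * (T : ℝ) ^ (-α) :=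
    calc (1 - α) * S ≤ (t : ℝ) ^ (1 - α) - (j : ℝ) ^ (1 - α) :=
          one_sub_mul_sum_Icc_rpow_neg_le hα0.le (by linarith) hjt
      _ ≤ (T : ℝ) ^ (1 - α) - (j : ℝ) ^ (1 - α) := by gcongr; linarith
      _ ≤ (T - j) * (T : ℝ) ^ (-α) :=
          rpow_one_sub_sub_rpow_one_sub_le (Nat.cast_nonneg j) hjT hα0.le (by linarith)
  have hS0 : 0 ≤ S := sum_nonneg fun k _ => by positivity
  have hTα : 0 ≤ (T : ℝ) ^ (-α) := by positivity
  rw [div_eq_mul_inv 2, ← rpow_neg (Nat.cast_nonneg T), one_div_mul_eq_div,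
    div_le_iff₀ (by linarith)]
  nlinarith

theorem stmt_2
    (T j t : ℕ) (hj : 1 ≤ j) (hjt : j ≤ t) (htT : t ≤ T)
    (α : ℝ) (hα0 : 0 < α) (hα : α ≤ 1 / 2) :
    (1 / ((T : ℝ) - (j : ℝ) + 1)) * ∑ k ∈ Finset.Icc (j + 1) t, ((k : ℝ)) ^ (-α)
      ≤ 2 / (T : ℝ) ^ α :=
  stmt_2_general T j t hjt htT α hα0 hα
end

section
/- For the sequence (z_t) defined in the context, for all indices with 1 ≤ j < t ≤ T+1, the j-th coordinate of z_t satisfies z_{t,j} ≥ (1−β)·b_j·η_j − a_j · Σ_{k=j+1}^{t−1} η_k. -/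
/- STATEMENT 4: for the SGDM trajectory z on the lower-bound function, for all
   1 ≤ j < t ≤ T+1 one has z_{t,j} ≥ (1−β)·b_j·η_j − a_j·Σ_{k=j+1}^{t−1} η_k.
   The coordinate `j : Fin T` corresponds to the 1-based index `j+1`. -/
theorem stmt_4
    (T : ℕ) (hT : 1 ≤ T) (L β c α : ℝ)
    (hL : 0 < L) (hβ0 : 0 ≤ β) (hβ1 : β < 1) (hc : 0 < c) (hα0 : 0 ≤ α) (hα2 : α ≤ 1 / 2)
    (η : ℕ → ℝ) (hη : ∀ t : ℕ, η t = c * (t : ℝ) ^ (-α))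
    (a b : ℕ → ℝ)
    (hb : ∀ j : ℕ, b j = L * (j : ℝ) ^ α / (2 * (T : ℝ) ^ α))
    (ha : ∀ j : ℕ, a j = L * (1 - β) / (8 * ((T : ℝ) - (j : ℝ) + 1)))
    (h : ℕ → Fin T → ℝ)
    (hh : ∀ (i : ℕ) (j : Fin T), h i j =
      if (j : ℕ) + 1 < i then a ((j : ℕ) + 1)
      else if (j : ℕ) + 1 = i then -(b ((j : ℕ) + 1)) else 0)
    (z : ℕ → Fin T → ℝ) (hz1 : z 1 = 0)
    (hzrec : ∀ t : ℕ, 1 ≤ t →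
      z (t + 1) = z t - ((1 - β) * η t) • ∑ i ∈ Finset.Icc 1 t, (β ^ (t - i)) • h i) :
    ∀ (t : ℕ) (j : Fin T), (j : ℕ) + 1 < t → t ≤ T + 1 →
      (1 - β) * b ((j : ℕ) + 1) * η ((j : ℕ) + 1)
        - a ((j : ℕ) + 1) * ∑ k ∈ Finset.Icc ((j : ℕ) + 2) (t - 1), η k
      ≤ z t j := by
  intro t j hjt htT
  clear htT
  set J : ℕ := (j : ℕ) + 1 with hJ
  -- basic positivity facts
  have hη_nonneg : ∀ s : ℕ, 0 ≤ η s := by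
    intro s; rw [hη]
    positivity
  have hb_nonneg : 0 ≤ b J := by
    rw [hb]
    have h1 : (0:ℝ) ≤ ((J : ℕ) : ℝ) ^ α := Real.rpow_nonneg (by positivity) α
    have h2 : (0:ℝ) < (T : ℝ) ^ α :=
      Real.rpow_pos_of_pos (by exact_mod_cast hT) α
    positivity
  have ha_nonneg : 0 ≤ a J := by
    rw [ha]
    have hjT : (j : ℕ) < T := j.2
    have : ((J : ℕ) : ℝ) ≤ (T : ℝ) := by exact_mod_cast hjT
    have hden : (0:ℝ) < 8 * ((T : ℝ) - ((J:ℕ) : ℝ) + 1) := by nlinarith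
    have hnum : (0:ℝ) ≤ L * (1 - β) := by nlinarith
    exact div_nonneg hnum hden.le
  -- evaluation of the recursion at coordinate j
  have hzrec' : ∀ s : ℕ, 1 ≤ s →
      z (s + 1) j = z s j - (1 - β) * η s * ∑ i ∈ Finset.Icc 1 s, β ^ (s - i) * h i j := by
    intro s hs
    have := congrFun (hzrec s hs) j
    simpa [Finset.sum_apply, Finset.mul_sum, mul_assoc] using this
  -- z is zero up to step J
  have hzero : ∀ s : ℕ, 1 ≤ s → s ≤ J → z s j = 0 := by
    intro s hs
    induction s, hs using Nat.le_induction with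
    | base => intro _; simp [hz1]
    | succ s hs ih =>
      intro hsJ
      have hsJ' : s ≤ J := le_of_lt (Nat.lt_of_succ_le hsJ)
      rw [hzrec' s hs, ih hsJ']
      have hsum : ∑ i ∈ Finset.Icc 1 s, β ^ (s - i) * h i j = 0 := by
        apply Finset.sum_eq_zero
        intro i hi
        simp only [Finset.mem_Icc] at hi
        have hiJ : i < J := lt_of_le_of_lt hi.2 (Nat.lt_of_succ_le hsJ)
        rw [hh]
        rw [if_neg (by omega), if_neg (by omega)]
        ring
      rw [hsum]; ring
  -- geometric sum bound
  have hgeom : ∀ s : ℕ, (1 - β) * ∑ i ∈ Finset.Icc (J + 1) s, β ^ (s - i) ≤ 1 := by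
    intro s
    have hle : ∑ i ∈ Finset.Icc (J + 1) s, β ^ (s - i)
        ≤ ∑ m ∈ Finset.range (s + 1), β ^ m := by
      have himg : ∑ i ∈ Finset.Icc (J + 1) s, β ^ (s - i)
          = ∑ m ∈ (Finset.Icc (J + 1) s).image (fun i => s - i), β ^ m := by
        rw [Finset.sum_image]
        intro x hx y hy hxy
        simp only [Finset.coe_Icc, Set.mem_Icc, Finset.mem_coe, Finset.mem_Icc] at hx hy hxy
        omega
      rw [himg]
      apply Finset.sum_le_sum_of_subset_of_nonneg
      · intro m hm
        simp only [Finset.mem_image, Finset.mem_Icc] at hm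
        simp only [Finset.mem_range]
        omega
      · intro m _ _
        exact pow_nonneg hβ0 m
    have hgs := geom_sum_mul β (s + 1)
    have hpow : 0 ≤ β ^ (s + 1) := pow_nonneg hβ0 (s + 1)
    have hsum_nonneg : (0:ℝ) ≤ 1 - β := by linarith
    nlinarith
  -- main induction from t = J + 1
  have hmain : ∀ s : ℕ, J + 1 ≤ s →
      (1 - β) * b J * η J - a J * ∑ k ∈ Finset.Icc (J + 1) (s - 1), η k ≤ z s j := by
    intro s hs
    induction s, hs using Nat.le_induction with
    | base =>
      have hJ1 : 1 ≤ J := by omega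
      rw [hzrec' J hJ1, hzero J hJ1 le_rfl]
      have hsum : ∑ i ∈ Finset.Icc 1 J, β ^ (J - i) * h i j = -(b J) := by
        rw [Finset.sum_eq_single J]
        · rw [hh, if_neg (by omega), if_pos rfl]
          simp [hJ]
        · intro i hi hiJ
          simp only [Finset.mem_Icc] at hi
          rw [hh, if_neg (by omega), if_neg (by omega)]
          ring
        · intro hJnot
          exact absurd (Finset.mem_Icc.mpr ⟨hJ1, le_rfl⟩) hJnot
      rw [hsum]
      have hempty : Finset.Icc (J + 1) (J + 1 - 1) = ∅ := by
        apply Finset.Icc_eq_empty; omega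
      rw [hempty]
      simp
      ring_nf
      nlinarith [hη_nonneg J]
    | succ s hs ih =>
      have hs1 : 1 ≤ s := by omega
      rw [hzrec' s hs1]
      -- bound the gradient sum
      have hSle : (1 - β) * (∑ i ∈ Finset.Icc 1 s, β ^ (s - i) * h i j) ≤ a J := by
        have hstep : ∑ i ∈ Finset.Icc 1 s, β ^ (s - i) * h i j
            ≤ ∑ i ∈ Finset.Icc 1 s, β ^ (s - i) * (if J < i then a J else 0) := by
          apply Finset.sum_le_sum
          intro i hi
          apply mul_le_mul_of_nonneg_left _ (pow_nonneg hβ0 (s - i))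
          rw [hh]
          by_cases h1 : J < i
          · rw [if_pos h1, if_pos h1]
          · rw [if_neg h1, if_neg h1]
            by_cases h2 : J = i
            · rw [if_pos h2]; linarith
            · rw [if_neg h2]
        have heq : ∑ i ∈ Finset.Icc 1 s, β ^ (s - i) * (if J < i then a J else 0)
            = a J * ∑ i ∈ Finset.Icc (J + 1) s, β ^ (s - i) := by
          rw [Finset.mul_sum]
          rw [← Finset.sum_filter_add_sum_filter_not (Finset.Icc 1 s) (fun i => J < i)]
          have h2 : ∑ i ∈ (Finset.Icc 1 s).filter (fun i => ¬ J < i),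
              β ^ (s - i) * (if J < i then a J else 0) = 0 := by
            apply Finset.sum_eq_zero
            intro i hi
            simp only [Finset.mem_filter] at hi
            rw [if_neg hi.2]; ring
          rw [h2, add_zero]
          have h3 : (Finset.Icc 1 s).filter (fun i => J < i) = Finset.Icc (J + 1) s := by
            ext i
            simp only [Finset.mem_filter, Finset.mem_Icc]
            omega
          rw [h3]
          apply Finset.sum_congr rfl
          intro i hi
          simp only [Finset.mem_Icc] at hi
          rw [if_pos (by omega)]; ring
        have hgs := hgeom s
        have hsum_nn : (0:ℝ) ≤ ∑ i ∈ Finset.Icc (J + 1) s, β ^ (s - i) :=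
          Finset.sum_nonneg fun i _ => pow_nonneg hβ0 _
        calc (1 - β) * (∑ i ∈ Finset.Icc 1 s, β ^ (s - i) * h i j)
            ≤ (1 - β) * (a J * ∑ i ∈ Finset.Icc (J + 1) s, β ^ (s - i)) := by
              apply mul_le_mul_of_nonneg_left _ (by linarith)
              exact le_trans hstep (le_of_eq heq)
          _ = a J * ((1 - β) * ∑ i ∈ Finset.Icc (J + 1) s, β ^ (s - i)) := by ring
          _ ≤ a J * 1 := by
              exact mul_le_mul_of_nonneg_left hgs ha_nonneg
          _ = a J := mul_one _
      -- sum splitting on the RHS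
      have hsplit : ∑ k ∈ Finset.Icc (J + 1) (s + 1 - 1), η k
          = (∑ k ∈ Finset.Icc (J + 1) (s - 1), η k) + η s := by
        have hs2 : s + 1 - 1 = (s - 1) + 1 := by omega
        have hss : s - 1 + 1 = s := by omega
        rw [hs2, Finset.sum_Icc_succ_top (by omega : J + 1 ≤ s - 1 + 1), hss]
      rw [hsplit]
      have key : (1 - β) * η s * (∑ i ∈ Finset.Icc 1 s, β ^ (s - i) * h i j)
          ≤ a J * η s := by
        have := mul_le_mul_of_nonneg_left hSle (hη_nonneg s)
        nlinarith [hη_nonneg s]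
      linarith
  exact hmain t hjt
end

section
/- For the sequence (z_t) defined in the context, for all indices with 1 ≤ j < t ≤ T+1, the j-th coordinate of z_t satisfies z_{t,j} ≥ L(1−β)c/(4·T^α). -/
/-!
Write `k = j + 1` for the 1-based coordinate. Coordinate `j` of `z t` is
`-Σ_{1 ≤ s < t} η_s (1 - β) m_s`, where `m_s = β m_{s-1} + h_{s,j}` is the scalar momentum of
that coordinate. It vanishes before step `k`, equals `-b_k` at step `k`, and afterwards satisfies
`(1 - β) m_s ≤ a_k` because every `h_{i,j} ≤ a_k`. So step `k` pushes the coordinate up by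
`(1 - β) η_k b_k = L(1-β)c / (2T^α)`, while the later steps pull it down by at most
`a_k Σ_{k<s≤T} η_s ≤ 2 a_k c (T - k) T^{-α} ≤ L(1-β)c / (4T^α)`. The sum of `s^{-α}` is
controlled through `s^{-α} ≤ T^{-α} √(T/s)` (this is where `α ≤ 1/2` enters) and
`Σ_{k<s≤T} 1/√s ≤ 2(√T - √k)`.
-/

open Finset

lemma inv_sqrt_add_one_le {x : ℝ} (hx : 0 ≤ x) : 1 / √(x + 1) ≤ 2 * (√(x + 1) - √x) := by
  have hpos : 0 < √(x + 1) := Real.sqrt_pos.2 (by linarith)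
  have hle : √x ≤ √(x + 1) := Real.sqrt_le_sqrt (by linarith)
  rw [div_le_iff₀ hpos]
  nlinarith [Real.sq_sqrt hx, Real.sq_sqrt (show 0 ≤ x + 1 by linarith), Real.sqrt_nonneg x]

lemma sum_Ioc_inv_sqrt_le {k T : ℕ} (hkT : k ≤ T) :
    ∑ s ∈ Ioc k T, 1 / √(s : ℝ) ≤ 2 * (√(T : ℝ) - √(k : ℝ)) := by
  induction T, hkT using Nat.le_induction with
  | base => simp
  | succ n hkn ih =>
    rw [sum_Ioc_succ_top hkn]
    have := inv_sqrt_add_one_le (Nat.cast_nonneg (α := ℝ) n)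
    push_cast
    linarith

lemma sum_Ioc_rpow_neg_le {k T : ℕ} (hkT : k ≤ T) {α : ℝ} (hα : α ≤ 1 / 2) :
    ∑ s ∈ Ioc k T, (s : ℝ) ^ (-α) ≤ 2 * (T - k) * (T : ℝ) ^ (-α) := by
  have hterm : ∀ s ∈ Ioc k T, (s : ℝ) ^ (-α) ≤ (T : ℝ) ^ (-α) * √(T : ℝ) * (1 / √(s : ℝ)) := by
    intro s hs
    obtain ⟨hks, hsT⟩ := mem_Ioc.1 hs
    have hs0 : (0 : ℝ) < s := by exact_mod_cast (show 0 < s by omega)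
    have hT0 : (0 : ℝ) < T := by exact_mod_cast (show 0 < T by omega)
    have hTs : 1 ≤ (T : ℝ) / s := (one_le_div hs0).2 (by exact_mod_cast hsT)
    calc (s : ℝ) ^ (-α) = (T : ℝ) ^ (-α) * ((T : ℝ) / s) ^ α := by
          have := Real.rpow_pos_of_pos hT0 α
          rw [Real.div_rpow hT0.le hs0.le, Real.rpow_neg hT0.le, Real.rpow_neg hs0.le]
          field_simp
      _ ≤ (T : ℝ) ^ (-α) * ((T : ℝ) / s) ^ (1 / 2 : ℝ) := by
          gcongr
      _ = (T : ℝ) ^ (-α) * √(T : ℝ) * (1 / √(s : ℝ)) := by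
          rw [← Real.sqrt_eq_rpow, Real.sqrt_div' _ hs0.le]
          ring
  have hkT' : (k : ℝ) ≤ √(T : ℝ) * √(k : ℝ) := by
    have : √(k : ℝ) ≤ √(T : ℝ) := Real.sqrt_le_sqrt (by exact_mod_cast hkT)
    nlinarith [Real.mul_self_sqrt (Nat.cast_nonneg (α := ℝ) k), Real.sqrt_nonneg (k : ℝ)]
  calc ∑ s ∈ Ioc k T, (s : ℝ) ^ (-α)
      ≤ ∑ s ∈ Ioc k T, (T : ℝ) ^ (-α) * √(T : ℝ) * (1 / √(s : ℝ)) := sum_le_sum hterm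
    _ = (T : ℝ) ^ (-α) * √(T : ℝ) * ∑ s ∈ Ioc k T, 1 / √(s : ℝ) := by rw [mul_sum]
    _ ≤ (T : ℝ) ^ (-α) * √(T : ℝ) * (2 * (√(T : ℝ) - √(k : ℝ))) := by
        gcongr
        exact sum_Ioc_inv_sqrt_le hkT
    _ ≤ 2 * (T - k) * (T : ℝ) ^ (-α) := by
        have := Real.rpow_nonneg (Nat.cast_nonneg (α := ℝ) T) (-α)
        nlinarith [Real.mul_self_sqrt (Nat.cast_nonneg (α := ℝ) T)]

lemma eq_neg_sum_Ico_of_eq_sub {M : Type*} [AddCommGroup M] {z g : ℕ → M} (h1 : z 1 = 0)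
    (hrec : ∀ t, 1 ≤ t → z (t + 1) = z t - g t) {t : ℕ} (ht : 1 ≤ t) :
    z t = -∑ s ∈ Ico 1 t, g s := by
  induction t, ht using Nat.le_induction with
  | base => simp [h1]
  | succ n hn ih => rw [hrec n hn, ih, sum_Ico_succ_top hn]; abel

def momentum (β : ℝ) (x : ℕ → ℝ) (s : ℕ) : ℝ := ∑ i ∈ Icc 1 s, β ^ (s - i) * x i

section momentum

variable {β : ℝ} {x : ℕ → ℝ}

lemma momentum_succ (s : ℕ) : momentum β x (s + 1) = β * momentum β x s + x (s + 1) := by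
  rw [momentum, momentum, sum_Icc_succ_top (by omega), Nat.sub_self, pow_zero, one_mul, mul_sum]
  congr 1
  refine sum_congr rfl fun i hi => ?_
  rw [show s + 1 - i = s - i + 1 by have := (mem_Icc.1 hi).2; omega, pow_succ]
  ring

lemma momentum_eq_zero_of_lt {k s : ℕ} (hx : ∀ i < k, x i = 0) (hs : s < k) :
    momentum β x s = 0 :=
  sum_eq_zero fun i hi => by rw [hx i (by have := (mem_Icc.1 hi).2; omega), mul_zero]

lemma momentum_eq_self {k : ℕ} (hx : ∀ i < k, x i = 0) (hk : 1 ≤ k) : momentum β x k = x k := by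
  obtain ⟨n, rfl⟩ : ∃ n, k = n + 1 := ⟨k - 1, by omega⟩
  rw [momentum_succ, momentum_eq_zero_of_lt hx (Nat.lt_succ_self n), mul_zero, zero_add]

lemma one_sub_mul_momentum_le {A : ℝ} (hβ0 : 0 ≤ β) (hβ1 : β ≤ 1) (hA : 0 ≤ A)
    (hx : ∀ i, x i ≤ A) (s : ℕ) : (1 - β) * momentum β x s ≤ A := by
  induction s with
  | zero => simpa [momentum] using hA
  | succ n ih =>
    have h1 := mul_le_mul_of_nonneg_left ih hβ0
    have h2 := mul_le_mul_of_nonneg_left (hx (n + 1)) (sub_nonneg.2 hβ1)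
    rw [momentum_succ]
    linarith

end momentum

lemma sum_Ico_mul_le {w f : ℕ → ℝ} {k t : ℕ} {A : ℝ} (hw : ∀ s, 0 ≤ w s)
    (hf0 : ∀ s < k, f s = 0) (hfA : ∀ s, f s ≤ A) (hk : 1 ≤ k) (hkt : k < t) :
    ∑ s ∈ Ico 1 t, w s * f s ≤ w k * f k + A * ∑ s ∈ Ico (k + 1) t, w s := by
  rw [← sum_Ico_consecutive _ hk hkt.le, sum_eq_sum_Ico_succ_bot hkt,
    sum_eq_zero fun s hs => by rw [hf0 s (mem_Ico.1 hs).2, mul_zero], zero_add, mul_sum]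
  refine add_le_add_right (sum_le_sum fun s _ => ?_) _
  rw [mul_comm A]
  exact mul_le_mul_of_nonneg_left (hfA s) (hw s)

lemma mul_sum_Ico_rpow_neg_le {k t T : ℕ} {L β c α : ℝ} (hk : 0 < k) (hkT : k ≤ T)
    (htT : t ≤ T + 1) (hL : 0 ≤ L) (hβ1 : β ≤ 1) (hc : 0 ≤ c) (hα : α ≤ 1 / 2) :
    L * (1 - β) / (8 * ((T : ℝ) - k + 1)) * ∑ s ∈ Ico (k + 1) t, c * (s : ℝ) ^ (-α) ≤
      L * (1 - β) * c / (4 * (T : ℝ) ^ α) := by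
  have hkT' : (k : ℝ) ≤ T := by exact_mod_cast hkT
  have hT0 : (0 : ℝ) < T := by exact_mod_cast hk.trans_le hkT
  have hsum : ∑ s ∈ Ico (k + 1) t, (s : ℝ) ^ (-α) ≤ 2 * (T - k) * (T : ℝ) ^ (-α) := by
    refine le_trans (sum_le_sum_of_subset_of_nonneg (fun s hs => ?_) fun s _ _ => by positivity)
      (sum_Ioc_rpow_neg_le hkT hα)
    rw [mem_Ico] at hs
    exact mem_Ioc.2 ⟨by omega, by omega⟩
  calc L * (1 - β) / (8 * ((T : ℝ) - k + 1)) * ∑ s ∈ Ico (k + 1) t, c * (s : ℝ) ^ (-α)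
      = L * (1 - β) / (8 * ((T : ℝ) - k + 1)) * c * ∑ s ∈ Ico (k + 1) t, (s : ℝ) ^ (-α) := by
        rw [← mul_sum, mul_assoc]
    _ ≤ L * (1 - β) / (8 * ((T : ℝ) - k + 1)) * c * (2 * (T - k) * (T : ℝ) ^ (-α)) := by
        gcongr
    _ ≤ L * (1 - β) * c / (4 * (T : ℝ) ^ α) := by
        have := Real.rpow_pos_of_pos hT0 α
        rw [Real.rpow_neg hT0.le]
        field_simp
        rw [div_le_iff₀ (by linarith)]
        nlinarith [mul_nonneg (mul_nonneg hL (sub_nonneg.2 hβ1)) hc]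

theorem stmt_5_general
    (T : ℕ) (L β c α : ℝ)
    (hL : 0 < L) (hβ0 : 0 ≤ β) (hβ1 : β < 1) (hc : 0 < c) (hα2 : α ≤ 1 / 2)
    (η : ℕ → ℝ) (hη : ∀ t : ℕ, η t = c * (t : ℝ) ^ (-α))
    (a b : ℕ → ℝ)
    (hb : ∀ j : ℕ, b j = L * (j : ℝ) ^ α / (2 * (T : ℝ) ^ α))
    (ha : ∀ j : ℕ, a j = L * (1 - β) / (8 * ((T : ℝ) - (j : ℝ) + 1)))
    (h : ℕ → Fin T → ℝ)
    (hh : ∀ (i : ℕ) (j : Fin T), h i j =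
      if (j : ℕ) + 1 < i then a ((j : ℕ) + 1)
      else if (j : ℕ) + 1 = i then -(b ((j : ℕ) + 1)) else 0)
    (z : ℕ → Fin T → ℝ) (hz1 : z 1 = 0)
    (hzrec : ∀ t : ℕ, 1 ≤ t →
      z (t + 1) = z t - ((1 - β) * η t) • ∑ i ∈ Finset.Icc 1 t, (β ^ (t - i)) • h i) :
    ∀ (t : ℕ) (j : Fin T), (j : ℕ) + 1 < t → t ≤ T + 1 →
      L * (1 - β) * c / (4 * (T : ℝ) ^ α) ≤ z t j := by
  intro t j hjt htT
  set k := (j : ℕ) + 1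
  have hk0 : (0 : ℝ) < k := by positivity
  have hη0 : ∀ s, 0 ≤ η s := fun s => by rw [hη]; positivity
  have hak : 0 ≤ a k := by
    rw [ha]
    exact div_nonneg (by nlinarith) (by linarith [show (k : ℝ) ≤ T by exact_mod_cast j.isLt])
  have hbk : 0 ≤ b k := by rw [hb]; positivity
  have hx0 : ∀ i < k, h i j = 0 := fun i hi => by rw [hh, if_neg (by omega), if_neg (by omega)]
  have hxA : ∀ i, h i j ≤ a k := fun i => by
    rw [hh]
    split_ifs
    exacts [le_rfl, by linarith, hak]
  have hz : z t j = -∑ s ∈ Ico 1 t, η s * ((1 - β) * momentum β (fun i => h i j) s) := by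
    rw [eq_neg_sum_Ico_of_eq_sub hz1 hzrec (by omega)]
    simp only [Pi.neg_apply, Finset.sum_apply, Pi.smul_apply, smul_eq_mul, momentum]
    exact congrArg _ (sum_congr rfl fun s _ => by ring)
  have hsum := sum_Ico_mul_le hη0 (fun s hs => by rw [momentum_eq_zero_of_lt hx0 hs, mul_zero])
    (one_sub_mul_momentum_le hβ0 hβ1.le hak hxA) (by omega) hjt
  have head : η k * ((1 - β) * momentum β (fun i => h i j) k) =
      -(2 * (L * (1 - β) * c / (4 * (T : ℝ) ^ α))) := by
    rw [momentum_eq_self hx0 (by omega), hh, if_neg (by omega), if_pos rfl, hη, hb,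
      Real.rpow_neg hk0.le]
    field_simp
    ring
  have tail : a k * ∑ s ∈ Ico (k + 1) t, η s ≤ L * (1 - β) * c / (4 * (T : ℝ) ^ α) := by
    simp only [ha, hη]
    exact mul_sum_Ico_rpow_neg_le (by omega) j.isLt htT hL.le hβ1.le hc.le hα2
  rw [hz]
  linarith

theorem stmt_5
    (T : ℕ) (hT : 1 ≤ T) (L β c α : ℝ)
    (hL : 0 < L) (hβ0 : 0 ≤ β) (hβ1 : β < 1) (hc : 0 < c) (hα0 : 0 ≤ α) (hα2 : α ≤ 1 / 2)
    (η : ℕ → ℝ) (hη : ∀ t : ℕ, η t = c * (t : ℝ) ^ (-α))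
    (a b : ℕ → ℝ)
    (hb : ∀ j : ℕ, b j = L * (j : ℝ) ^ α / (2 * (T : ℝ) ^ α))
    (ha : ∀ j : ℕ, a j = L * (1 - β) / (8 * ((T : ℝ) - (j : ℝ) + 1)))
    (h : ℕ → Fin T → ℝ)
    (hh : ∀ (i : ℕ) (j : Fin T), h i j =
      if (j : ℕ) + 1 < i then a ((j : ℕ) + 1)
      else if (j : ℕ) + 1 = i then -(b ((j : ℕ) + 1)) else 0)
    (z : ℕ → Fin T → ℝ) (hz1 : z 1 = 0)
    (hzrec : ∀ t : ℕ, 1 ≤ t →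
      z (t + 1) = z t - ((1 - β) * η t) • ∑ i ∈ Finset.Icc 1 t, (β ^ (t - i)) • h i) :
    ∀ (t : ℕ) (j : Fin T), (j : ℕ) + 1 < t → t ≤ T + 1 →
      L * (1 - β) * c / (4 * (T : ℝ) ^ α) ≤ z t j :=
  stmt_5_general T L β c α hL hβ0 hβ1 hc hα2 η hη a b hb ha h hh z hz1 hzrec
end

section
/- Regret bound for FTRL with proximal quadratic regularizers: under the setting in the context, for every comparator u ∈ ℝ^d, Σ_{t=1}^{T} (ℓ_t(w_t) − ℓ_t(u)) ≤ ‖(u − x_1)/√γ_{T−1}‖² + (1/2)·Σ_{t=1}^{T} ⟨γ_{t−1}, g_t²⟩, where division, square root, and squaring of vectors are coordinate-wise and ⟨·,·⟩ is the Euclidean inner product. -/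
/- STATEMENT 8 (regret bound for FTRL with proximal quadratic regularizers):
   with regularizers ψ_t(w) = ‖(x_1 − w)/√γ_{t−1}‖² (coordinate-wise division and square
   root), iterates w_t minimizing ψ_t(w) + Σ_{i<t} ⟨g_i, w⟩ over ℝ^d, and g_t a subgradient
   of the convex loss ℓ_t at w_t, for every u:
   Σ_{t=1}^T (ℓ_t(w_t) − ℓ_t(u)) ≤ ‖(u − x_1)/√γ_{T−1}‖² + (1/2)·Σ_{t=1}^T ⟨γ_{t−1}, g_t²⟩.
   Times are 1-based; γ is indexed 0,…,T−1. -/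
theorem stmt_8
    (d T : ℕ) (hd : 1 ≤ d) (hT : 1 ≤ T)
    (γ : ℕ → Fin d → ℝ)
    (hγpos : ∀ t : ℕ, t ≤ T - 1 → ∀ j, 0 < γ t j)
    (hγmono : ∀ t : ℕ, 1 ≤ t → t ≤ T - 1 → ∀ j, γ t j ≤ γ (t - 1) j)
    (ℓ : ℕ → (Fin d → ℝ) → ℝ)
    (hℓconv : ∀ t : ℕ, 1 ≤ t → t ≤ T → ConvexOn ℝ Set.univ (ℓ t))
    (x1 : Fin d → ℝ)
    (w g : ℕ → Fin d → ℝ)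
    (hw : ∀ t : ℕ, 1 ≤ t → t ≤ T → ∀ v : Fin d → ℝ,
      (∑ j, ((x1 j - w t j) / Real.sqrt (γ (t - 1) j)) ^ 2)
          + ∑ i ∈ Finset.Icc 1 (t - 1), ∑ j, g i j * w t j
        ≤ (∑ j, ((x1 j - v j) / Real.sqrt (γ (t - 1) j)) ^ 2)
          + ∑ i ∈ Finset.Icc 1 (t - 1), ∑ j, g i j * v j)
    (hg : ∀ t : ℕ, 1 ≤ t → t ≤ T → ∀ y : Fin d → ℝ,
      ℓ t (w t) + ∑ j, g t j * (y j - w t j) ≤ ℓ t y) :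
    ∀ u : Fin d → ℝ,
      ∑ t ∈ Finset.Icc 1 T, (ℓ t (w t) - ℓ t u)
        ≤ (∑ j, ((u j - x1 j) / Real.sqrt (γ (T - 1) j)) ^ 2)
          + (1 / 2) * ∑ t ∈ Finset.Icc 1 T, ∑ j, γ (t - 1) j * (g t j) ^ 2 := by
  intro u
  obtain ⟨T', rfl⟩ : ∃ T', T = T' + 1 := ⟨T - 1, by omega⟩
  simp only [Nat.add_sub_cancel] at hγpos hγmono ⊢
  -- hw without square roots
  have hw' : ∀ t : ℕ, 1 ≤ t → t ≤ T' + 1 → ∀ v : Fin d → ℝ,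
      (∑ j, (x1 j - w t j) ^ 2 / γ (t - 1) j)
          + ∑ i ∈ Finset.Icc 1 (t - 1), ∑ j, g i j * w t j
        ≤ (∑ j, (x1 j - v j) ^ 2 / γ (t - 1) j)
          + ∑ i ∈ Finset.Icc 1 (t - 1), ∑ j, g i j * v j := by
    intro t ht1 htT v
    have e : ∀ z : Fin d → ℝ,
        (∑ j, ((x1 j - z j) / Real.sqrt (γ (t - 1) j)) ^ 2)
          = ∑ j, (x1 j - z j) ^ 2 / γ (t - 1) j := by
      intro z
      refine Finset.sum_congr rfl fun j _ => ?_
      rw [div_pow, Real.sq_sqrt (hγpos (t - 1) (by omega) j).le]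
    have h := hw t ht1 htT v
    rw [e, e] at h
    exact h
  -- strong minimality via midpoint
  have hsm : ∀ t : ℕ, 1 ≤ t → t ≤ T' + 1 → ∀ v : Fin d → ℝ,
      (∑ j, (x1 j - w t j) ^ 2 / γ (t - 1) j)
          + (∑ i ∈ Finset.Icc 1 (t - 1), ∑ j, g i j * w t j)
          + 2 * ∑ j, (w t j - v j) ^ 2 / (4 * γ (t - 1) j)
        ≤ (∑ j, (x1 j - v j) ^ 2 / γ (t - 1) j)
          + ∑ i ∈ Finset.Icc 1 (t - 1), ∑ j, g i j * v j := by
    intro t ht1 htT v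
    have h := hw' t ht1 htT (fun j => (w t j + v j) / 2)
    have e1 : (∑ j, (x1 j - (w t j + v j) / 2) ^ 2 / γ (t - 1) j)
        = ((∑ j, (x1 j - w t j) ^ 2 / γ (t - 1) j)
            + (∑ j, (x1 j - v j) ^ 2 / γ (t - 1) j)) / 2
          - ∑ j, (w t j - v j) ^ 2 / (4 * γ (t - 1) j) := by
      rw [← Finset.sum_add_distrib, Finset.sum_div, ← Finset.sum_sub_distrib]
      refine Finset.sum_congr rfl fun j _ => ?_
      have hc : γ (t - 1) j ≠ 0 := (hγpos (t - 1) (by omega) j).ne'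
      field_simp
      ring
    have e2 : (∑ i ∈ Finset.Icc 1 (t - 1), ∑ j, g i j * ((w t j + v j) / 2))
        = ((∑ i ∈ Finset.Icc 1 (t - 1), ∑ j, g i j * w t j)
            + ∑ i ∈ Finset.Icc 1 (t - 1), ∑ j, g i j * v j) / 2 := by
      rw [← Finset.sum_add_distrib, Finset.sum_div]
      refine Finset.sum_congr rfl fun i _ => ?_
      rw [← Finset.sum_add_distrib, Finset.sum_div]
      refine Finset.sum_congr rfl fun j _ => ?_
      ring
    rw [e1, e2] at h
    linarith
  -- per-step stability bound
  have hstep : ∀ t : ℕ, 1 ≤ t → t ≤ T' + 1 → ∀ v : Fin d → ℝ,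
      (∑ j, (x1 j - w t j) ^ 2 / γ (t - 1) j)
          + (∑ i ∈ Finset.Icc 1 (t - 1), ∑ j, g i j * w t j)
          + (∑ j, g t j * w t j)
        ≤ (∑ j, (x1 j - v j) ^ 2 / γ (t - 1) j)
          + (∑ i ∈ Finset.Icc 1 (t - 1), ∑ j, g i j * v j)
          + (∑ j, g t j * v j)
          + (1 / 2) * ∑ j, γ (t - 1) j * g t j ^ 2 := by
    intro t ht1 htT v
    have key : ∀ j : Fin d, g t j * w t j
        ≤ g t j * v j + 2 * ((w t j - v j) ^ 2 / (4 * γ (t - 1) j))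
          + (1 / 2) * (γ (t - 1) j * g t j ^ 2) := by
      intro j
      have hc : (0 : ℝ) < γ (t - 1) j := hγpos (t - 1) (by omega) j
      have h1 : 2 * ((w t j - v j) ^ 2 / (4 * γ (t - 1) j))
          + (1 / 2) * (γ (t - 1) j * g t j ^ 2)
          - (g t j * w t j - g t j * v j)
          = (w t j - v j - γ (t - 1) j * g t j) ^ 2 / (2 * γ (t - 1) j) := by
        field_simp
        ring
      have h2 : (0 : ℝ) ≤ (w t j - v j - γ (t - 1) j * g t j) ^ 2 / (2 * γ (t - 1) j) := by
        positivity
      linarith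
    have hs := Finset.sum_le_sum (fun j (_ : j ∈ Finset.univ) => key j)
    rw [Finset.sum_add_distrib, Finset.sum_add_distrib, ← Finset.mul_sum, ← Finset.mul_sum] at hs
    have hm := hsm t ht1 htT v
    linarith
  -- main induction
  have R : ∀ s : ℕ, s ≤ T' → ∀ v : Fin d → ℝ,
      (∑ i ∈ Finset.Icc 1 s, ∑ j, g i j * w i j)
        ≤ (∑ j, (x1 j - v j) ^ 2 / γ s j)
          + (∑ i ∈ Finset.Icc 1 s, ∑ j, g i j * v j)
          + (1 / 2) * ∑ i ∈ Finset.Icc 1 s, ∑ j, γ (i - 1) j * g i j ^ 2 := by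
    intro s
    induction s with
    | zero =>
      intro _ v
      simp only [Finset.Icc_eq_empty_of_lt (by omega : (0:ℕ) < 1), Finset.sum_empty,
        mul_zero, add_zero, zero_add]
      have : (0 : ℝ) ≤ ∑ j, (x1 j - v j) ^ 2 / γ 0 j :=
        Finset.sum_nonneg fun j _ => div_nonneg (sq_nonneg _) (hγpos 0 (by omega) j).le
      linarith
    | succ s ih =>
      intro hs v
      have hsT : s ≤ T' := by omega
      have hmonoψ : (∑ j, (x1 j - v j) ^ 2 / γ s j) ≤ ∑ j, (x1 j - v j) ^ 2 / γ (s + 1) j := by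
        refine Finset.sum_le_sum fun j _ => ?_
        have hpos : 0 < γ (s + 1) j := hγpos (s + 1) hs j
        have hle : γ (s + 1) j ≤ γ s j := by
          simpa using hγmono (s + 1) (by omega) hs j
        exact div_le_div_of_nonneg_left (sq_nonneg _) hpos hle
      have hih := ih hsT (w (s + 1))
      have hst := hstep (s + 1) (by omega) (by omega) v
      simp only [Nat.add_sub_cancel] at hst
      rw [Finset.sum_Icc_succ_top (by omega : 1 ≤ s + 1),
        Finset.sum_Icc_succ_top (by omega : 1 ≤ s + 1),
        Finset.sum_Icc_succ_top (by omega : 1 ≤ s + 1)]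
      simp only [Nat.add_sub_cancel]
      linarith
  -- linearize the losses
  have hreg : (∑ t ∈ Finset.Icc 1 (T' + 1), (ℓ t (w t) - ℓ t u))
      ≤ ∑ t ∈ Finset.Icc 1 (T' + 1), ((∑ j, g t j * w t j) - ∑ j, g t j * u j) := by
    refine Finset.sum_le_sum fun t ht => ?_
    rw [Finset.mem_Icc] at ht
    have h := hg t ht.1 ht.2 u
    have e : (∑ j, g t j * (u j - w t j))
        = (∑ j, g t j * u j) - ∑ j, g t j * w t j := by
      rw [← Finset.sum_sub_distrib]
      exact Finset.sum_congr rfl fun j _ => by ring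
    rw [e] at h
    linarith
  have hsplit : (∑ t ∈ Finset.Icc 1 (T' + 1), ((∑ j, g t j * w t j) - ∑ j, g t j * u j))
      = (∑ t ∈ Finset.Icc 1 (T' + 1), ∑ j, g t j * w t j)
        - ∑ t ∈ Finset.Icc 1 (T' + 1), ∑ j, g t j * u j := by
    rw [← Finset.sum_sub_distrib]
  -- assemble at t = T' + 1
  have hR := R T' le_rfl (w (T' + 1))
  have hst := hstep (T' + 1) (by omega) (by omega) u
  simp only [Nat.add_sub_cancel] at hst
  have efin : (∑ j, ((u j - x1 j) / Real.sqrt (γ T' j)) ^ 2)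
      = ∑ j, (x1 j - u j) ^ 2 / γ T' j := by
    refine Finset.sum_congr rfl fun j _ => ?_
    rw [div_pow, Real.sq_sqrt (hγpos T' le_rfl j).le]
    ring
  rw [efin, Finset.sum_Icc_succ_top (by omega : 1 ≤ T' + 1)]
  rw [hsplit] at hreg
  rw [Finset.sum_Icc_succ_top (by omega : 1 ≤ T' + 1),
    Finset.sum_Icc_succ_top (by omega : 1 ≤ T' + 1)] at hreg
  have hCsplit : (∑ t ∈ Finset.Icc 1 (T' + 1), ∑ j, γ (t - 1) j * g t j ^ 2)
      = (∑ t ∈ Finset.Icc 1 T', ∑ j, γ (t - 1) j * g t j ^ 2)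
        + ∑ j, γ T' j * g (T' + 1) j ^ 2 := by
    rw [Finset.sum_Icc_succ_top (by omega : 1 ≤ T' + 1)]
    simp
  have husplit : (∑ t ∈ Finset.Icc 1 (T' + 1), ∑ j, g t j * u j)
      = (∑ t ∈ Finset.Icc 1 T', ∑ j, g t j * u j) + ∑ j, g (T' + 1) j * u j :=
    Finset.sum_Icc_succ_top (by omega : 1 ≤ T' + 1) _
  rw [hCsplit]
  rw [husplit] at hreg
  linarith
end

section
/- Equivalence of the momentum and FTRL forms: under the setting in the context, for every t ≥ 1 it holds that η_t m_t = (α_{t+1} / Σ_{i=1}^{t+1} α_i) · γ_t · (Σ_{i=1}^{t} α_i g_i), where the product with the vector γ_t is coordinate-wise; equivalently, the iterates of Algorithm 1 satisfy x_{t+1} = (Σ_{i=1}^{t} α_i x_t + α_{t+1} w_{t+1}) / Σ_{i=1}^{t+1} α_i with w_{t+1} = x_1 − γ_t Σ_{i=1}^{t} α_i g_i. -/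
/- STATEMENT 9 (equivalence of the momentum and FTRL forms of Algorithm 1): with weights
   a_t > 0, A_t = Σ_{i=1}^t a_i, β_t = A_{t−1}/A_t, m_0 = 0, m_t = β_t m_{t−1} + (1−β_t) g_t,
   η_t = (a_{t+1} A_t / A_{t+1})·γ_t and
   x_{t+1} = (A_t/A_{t+1}) x_t + (a_{t+1}/A_{t+1}) x_1 − η_t * m_t (coordinate-wise product),
   for every t ≥ 1:
   η_t * m_t = (a_{t+1}/A_{t+1})·γ_t * (Σ_{i=1}^t a_i g_i), and equivalently
   x_{t+1} = (A_t x_t + a_{t+1} w_{t+1})/A_{t+1} with w_{t+1} = x_1 − γ_t * Σ_{i=1}^t a_i g_i. -/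
theorem stmt_9
    (d T : ℕ) (hd : 1 ≤ d) (hT : 1 ≤ T)
    (a : ℕ → ℝ) (ha : ∀ t : ℕ, 1 ≤ t → 0 < a t)
    (γ g : ℕ → Fin d → ℝ) (hγpos : ∀ t j, 1 ≤ t → 0 < γ t j)
    (β : ℕ → ℝ)
    (hβ : ∀ t : ℕ, 1 ≤ t →
      β t = (∑ i ∈ Finset.Icc 1 (t - 1), a i) / (∑ i ∈ Finset.Icc 1 t, a i))
    (m : ℕ → Fin d → ℝ) (hm0 : m 0 = 0)
    (hm : ∀ t : ℕ, 1 ≤ t → m t = β t • m (t - 1) + (1 - β t) • g t)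
    (η : ℕ → Fin d → ℝ)
    (hη : ∀ t : ℕ, 1 ≤ t → η t =
      (a (t + 1) * (∑ i ∈ Finset.Icc 1 t, a i) / (∑ i ∈ Finset.Icc 1 (t + 1), a i)) • γ t)
    (x : ℕ → Fin d → ℝ)
    (hx : ∀ t : ℕ, 1 ≤ t → x (t + 1) =
      ((∑ i ∈ Finset.Icc 1 t, a i) / (∑ i ∈ Finset.Icc 1 (t + 1), a i)) • x t
        + (a (t + 1) / (∑ i ∈ Finset.Icc 1 (t + 1), a i)) • x 1 - η t * m t) :
    ∀ t : ℕ, 1 ≤ t →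
      η t * m t = (a (t + 1) / (∑ i ∈ Finset.Icc 1 (t + 1), a i))
          • (γ t * ∑ i ∈ Finset.Icc 1 t, a i • g i)
      ∧ x (t + 1) =
          ((∑ i ∈ Finset.Icc 1 t, a i) / (∑ i ∈ Finset.Icc 1 (t + 1), a i)) • x t
            + (a (t + 1) / (∑ i ∈ Finset.Icc 1 (t + 1), a i))
              • (x 1 - γ t * ∑ i ∈ Finset.Icc 1 t, a i • g i) := by
  set A : ℕ → ℝ := fun t => ∑ i ∈ Finset.Icc 1 t, a i with hA
  have hApos : ∀ t : ℕ, 1 ≤ t → 0 < A t := by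
    intro t ht
    apply Finset.sum_pos
    · intro i hi
      exact ha i (Finset.mem_Icc.mp hi).1
    · exact ⟨1, Finset.mem_Icc.mpr ⟨le_refl 1, ht⟩⟩
  -- key lemma : A t • m t = ∑ a i • g i
  have hkey : ∀ t : ℕ, 1 ≤ t → A t • m t = ∑ i ∈ Finset.Icc 1 t, a i • g i := by
    intro t ht
    induction t with
    | zero => omega
    | succ n ih =>
      rcases Nat.eq_or_lt_of_le ht with h1 | h1
      · -- n + 1 = 1
        have hn : n = 0 := by omega
        subst hn
        have hβ1 : β 1 = 0 := by
          rw [hβ 1 (le_refl 1)]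
          simp
        have hm1 : m 1 = g 1 := by
          rw [hm 1 (le_refl 1), hβ1]
          simp [hm0]
        rw [hm1]
        simp [hA]
      · have hn : 1 ≤ n := by omega
        have hAn := hApos n hn
        have hstep : A (n + 1) = A n + a (n + 1) := by
          rw [hA]
          exact Finset.sum_Icc_succ_top (by omega : 1 ≤ n + 1) a
        have hβs : β (n + 1) = A n / A (n + 1) := by
          rw [hβ (n + 1) (by omega)]
          simp [hA]
        have hAn1 := hApos (n + 1) (by omega)
        have hmn : m (n + 1) = (A n / A (n + 1)) • m n + (1 - A n / A (n + 1)) • g (n + 1) := by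
          rw [hm (n + 1) (by omega), hβs]
          simp
        rw [hmn, Finset.sum_Icc_succ_top (by omega : 1 ≤ n + 1), ← ih hn]
        rw [smul_add, smul_smul, smul_smul]
        congr 1
        · congr 1
          field_simp
        · congr 1
          have hc : 1 - A n / A (n + 1) = a (n + 1) / A (n + 1) := by
            rw [eq_div_iff hAn1.ne', sub_mul, div_mul_cancel₀ _ hAn1.ne', hstep]
            ring
          rw [hc]
          field_simp
    -- end induction
  intro t ht
  have hAt := hApos t ht
  have hAt1 := hApos (t + 1) (by omega)
  have hfirst : η t * m t = (a (t + 1) / A (t + 1)) • (γ t * ∑ i ∈ Finset.Icc 1 t, a i • g i) := by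
    rw [hη t ht, ← hkey t ht]
    funext j
    simp only [Pi.mul_apply, Pi.smul_apply, smul_eq_mul]
    ring
  refine ⟨hfirst, ?_⟩
  rw [hx t ht, hfirst, smul_sub]
  abel
end

section
/- Let a_0 > 0, A ≥ 0, and a_1, …, a_m ∈ [0, A] be real numbers, and let f : (0, ∞) → [0, ∞) be a nonincreasing function. Then Σ_{i=1}^{m} a_i · f(a_0 + a_1 + ⋯ + a_{i−1}) ≤ ∫_{a_0}^{a_0 + a_1 + ⋯ + a_m} f(u) du + A·f(a_0). -/
/- STATEMENT 17 (Lemma 14 of Gaillard–Stoltz–van Erven): for a_0 > 0, A ≥ 0,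
   a_1, …, a_m ∈ [0, A] and f : (0, ∞) → [0, ∞) nonincreasing,
   Σ_{i=1}^m a_i · f(a_0 + ⋯ + a_{i−1}) ≤ ∫_{a_0}^{a_0 + ⋯ + a_m} f(u) du + A·f(a_0).
   Here a_0 + ⋯ + a_{i−1} is written as Σ_{k ∈ range i} a_k. -/
theorem stmt_17
    (m : ℕ) (A : ℝ) (hA : 0 ≤ A) (a : ℕ → ℝ)
    (ha0 : 0 < a 0)
    (ha : ∀ i : ℕ, 1 ≤ i → i ≤ m → 0 ≤ a i ∧ a i ≤ A)
    (f : ℝ → ℝ)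
    (hf_nonneg : ∀ x : ℝ, 0 < x → 0 ≤ f x)
    (hf_anti : ∀ x y : ℝ, 0 < x → x ≤ y → f y ≤ f x) :
    ∑ i ∈ Finset.Icc 1 m, a i * f (∑ k ∈ Finset.range i, a k)
      ≤ (∫ u in (a 0)..(∑ k ∈ Finset.range (m + 1), a k), f u) + A * f (a 0) := by
  set S : ℕ → ℝ := fun i => ∑ k ∈ Finset.range i, a k with hSdef
  have hS1 : S 1 = a 0 := by simp [hSdef]
  have hstep : ∀ i, S (i + 1) = S i + a i := fun i => Finset.sum_range_succ a i
  have hge : ∀ i, 1 ≤ i → i ≤ m + 1 → a 0 ≤ S i := by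
    intro i h1 h2
    induction i with
    | zero => omega
    | succ n ih =>
      rcases Nat.lt_or_ge 1 (n + 1) with h | h
      · have hn1 : 1 ≤ n := by omega
        have han : 0 ≤ a n := (ha n hn1 (by omega)).1
        have := ih hn1 (by omega)
        rw [hstep]; linarith
      · have hn0 : n = 0 := by omega
        subst hn0; rw [hS1]
  have hpos : ∀ i, 1 ≤ i → i ≤ m + 1 → 0 < S i :=
    fun i h1 h2 => lt_of_lt_of_le ha0 (hge i h1 h2)
  have hmono : ∀ i, 1 ≤ i → i ≤ m → S i ≤ S (i + 1) := by
    intro i h1 h2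
    have := (ha i h1 h2).1
    rw [hstep]; linarith
  -- integrability
  have hInt : ∀ i, 1 ≤ i → i ≤ m → IntervalIntegrable f MeasureTheory.volume (S i) (S (i + 1)) := by
    intro i h1 h2
    apply AntitoneOn.intervalIntegrable
    intro x hx y hy hxy
    rw [Set.uIcc_of_le (hmono i h1 h2)] at hx
    exact hf_anti x y (lt_of_lt_of_le (hpos i h1 (by omega)) hx.1) hxy
  -- per-term bound
  have hterm : ∀ i, 1 ≤ i → i ≤ m →
      a i * f (S i) ≤ (∫ u in (S i)..(S (i + 1)), f u) + a i * (f (S i) - f (S (i + 1))) := by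
    intro i h1 h2
    have hle := hmono i h1 h2
    have hiposa : 0 < S i := hpos i h1 (by omega)
    have hint : a i * f (S (i + 1)) ≤ ∫ u in (S i)..(S (i + 1)), f u := by
      have hc : IntervalIntegrable (fun _ => f (S (i + 1))) MeasureTheory.volume (S i) (S (i + 1)) :=
        intervalIntegrable_const
      have := intervalIntegral.integral_mono_on hle hc (hInt i h1 h2)
        (fun x hx => hf_anti x (S (i + 1)) (lt_of_lt_of_le hiposa hx.1) hx.2)
      rw [intervalIntegral.integral_const, smul_eq_mul] at this
      calc a i * f (S (i + 1)) = (S (i + 1) - S i) * f (S (i + 1)) := by rw [hstep]; ring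
        _ ≤ _ := this
    nlinarith [hint]
  calc ∑ i ∈ Finset.Icc 1 m, a i * f (S i)
      ≤ ∑ i ∈ Finset.Icc 1 m, ((∫ u in (S i)..(S (i + 1)), f u) + a i * (f (S i) - f (S (i + 1)))) := by
        apply Finset.sum_le_sum
        intro i hi
        rw [Finset.mem_Icc] at hi
        exact hterm i hi.1 hi.2
    _ = (∑ i ∈ Finset.Icc 1 m, ∫ u in (S i)..(S (i + 1)), f u)
        + ∑ i ∈ Finset.Icc 1 m, a i * (f (S i) - f (S (i + 1))) := Finset.sum_add_distrib
    _ ≤ (∫ u in (S 1)..(S (m + 1)), f u) + A * f (a 0) := by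
        have hIcc : Finset.Icc 1 m = Finset.Ico 1 (m + 1) := by
          ext x; simp [Nat.lt_succ_iff]
        have e1 : (∑ i ∈ Finset.Icc 1 m, ∫ u in (S i)..(S (i + 1)), f u)
            = ∫ u in (S 1)..(S (m + 1)), f u := by
          rw [hIcc, Finset.sum_Ico_eq_sum_range]
          simp only [Nat.add_sub_cancel]
          have := intervalIntegral.sum_integral_adjacent_intervals
            (f := f) (μ := MeasureTheory.volume) (a := fun k => S (k + 1)) (n := m)
            (fun k hk => by simpa [add_comm] using hInt (k + 1) (by omega) (by omega))
          simpa [add_comm, add_assoc, add_left_comm] using this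
        have e2 : ∑ i ∈ Finset.Icc 1 m, a i * (f (S i) - f (S (i + 1))) ≤ A * f (a 0) := by
          have hb : ∀ i ∈ Finset.Icc 1 m, a i * (f (S i) - f (S (i + 1))) ≤ A * (f (S i) - f (S (i + 1))) := by
            intro i hi
            rw [Finset.mem_Icc] at hi
            have hd : 0 ≤ f (S i) - f (S (i + 1)) := by
              have := hf_anti (S i) (S (i + 1)) (hpos i hi.1 (by omega)) (hmono i hi.1 hi.2)
              linarith
            exact mul_le_mul_of_nonneg_right (ha i hi.1 hi.2).2 hd
          calc ∑ i ∈ Finset.Icc 1 m, a i * (f (S i) - f (S (i + 1)))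
              ≤ ∑ i ∈ Finset.Icc 1 m, A * (f (S i) - f (S (i + 1))) := Finset.sum_le_sum hb
            _ = A * ∑ i ∈ Finset.Icc 1 m, (f (S i) - f (S (i + 1))) := by rw [Finset.mul_sum]
            _ = A * (f (S 1) - f (S (m + 1))) := by
                rw [hIcc, Finset.sum_Ico_eq_sum_range]
                simp only [Nat.add_sub_cancel]
                have := Finset.sum_range_sub' (fun k => f (S (k + 1))) m
                simp only [add_comm 1] at this ⊢
                exact congrArg (A * ·) this
            _ ≤ A * f (a 0) := by
                have h0 : 0 ≤ f (S (m + 1)) := hf_nonneg _ (hpos (m + 1) (by omega) (by omega))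
                rw [hS1]
                nlinarith
        rw [e1]
        linarith
    _ = (∫ u in (a 0)..(S (m + 1)), f u) + A * f (a 0) := by rw [hS1]
end

section
/- Global AdaGrad-type sum bound: let g_1, …, g_T ∈ ℝ^d satisfy ‖g_t‖ ≤ G for all t (Euclidean norm), and let ε > 0 and α > 0. Then Σ_{t=1}^{T} α·‖g_t‖² / √(ε + Σ_{i=1}^{t−1} ‖g_i‖²) ≤ 2α·√(Σ_{t=1}^{T} ‖g_t‖²) + α·G²/√ε. -/
private lemma tele_aux (F : ℕ → ℝ) (T : ℕ) :
    ∑ t ∈ Finset.Icc 1 T, (F t - F (t - 1)) = F T - F 0 := by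
  induction T with
  | zero => simp
  | succ n ih =>
      rw [Finset.sum_Icc_succ_top (by omega : 1 ≤ n + 1), ih]
      simp

private lemma term_aux (s a G : ℝ) (hs : 0 < s) (ha : 0 ≤ a) (haG : a ≤ G ^ 2) :
    a / Real.sqrt s ≤ 2 * (Real.sqrt (s + a) - Real.sqrt s)
      + G ^ 2 * (1 / Real.sqrt s - 1 / Real.sqrt (s + a)) := by
  set u := Real.sqrt s with hu_def
  set v := Real.sqrt (s + a) with hv_def
  have hu : 0 < u := Real.sqrt_pos.2 hs
  have hv : 0 < v := Real.sqrt_pos.2 (by linarith)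
  have hu2 : u ^ 2 = s := Real.sq_sqrt hs.le
  have hv2 : v ^ 2 = s + a := Real.sq_sqrt (by linarith)
  have huv : u ≤ v := Real.sqrt_le_sqrt (by linarith)
  have key : v * (v - u) ≤ G ^ 2 := by nlinarith [mul_le_mul_of_nonneg_left huv hu.le]
  have expand : a = v ^ 2 - u ^ 2 := by linarith
  have heq : 2 * (v - u) + G ^ 2 * (1 / u - 1 / v) - (v ^ 2 - u ^ 2) / u
      = (v - u) * (G ^ 2 - v * (v - u)) / (u * v) := by
    field_simp
    ring
  have hnn : 0 ≤ (v - u) * (G ^ 2 - v * (v - u)) / (u * v) :=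
    div_nonneg (mul_nonneg (by linarith) (by linarith)) (by positivity)
  rw [expand]
  linarith

/- STATEMENT 18 (global AdaGrad-type sum bound): for g_1, …, g_T ∈ ℝ^d with Euclidean
   norms ‖g_t‖ = √(Σ_j g_{t,j}²) ≤ G, and ε, α > 0,
   Σ_{t=1}^T α‖g_t‖²/√(ε + Σ_{i=1}^{t−1} ‖g_i‖²) ≤ 2α·√(Σ_{t=1}^T ‖g_t‖²) + αG²/√ε. -/
theorem stmt_18
    (T d : ℕ) (hT : 1 ≤ T) (hd : 1 ≤ d)
    (g : ℕ → Fin d → ℝ) (G ε α : ℝ) (hε : 0 < ε) (hα : 0 < α)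
    (hG : ∀ t : ℕ, 1 ≤ t → t ≤ T → Real.sqrt (∑ j, (g t j) ^ 2) ≤ G) :
    ∑ t ∈ Finset.Icc 1 T,
        α * (∑ j, (g t j) ^ 2) /
          Real.sqrt (ε + ∑ i ∈ Finset.Icc 1 (t - 1), ∑ j, (g i j) ^ 2)
      ≤ 2 * α * Real.sqrt (∑ t ∈ Finset.Icc 1 T, ∑ j, (g t j) ^ 2)
        + α * G ^ 2 / Real.sqrt ε := by
  set a : ℕ → ℝ := fun t => ∑ j, (g t j) ^ 2 with ha_def
  have ha : ∀ t, 0 ≤ a t := fun t => Finset.sum_nonneg fun j _ => sq_nonneg _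
  set S : ℕ → ℝ := fun t => ε + ∑ i ∈ Finset.Icc 1 t, a i with hS_def
  have hS0 : S 0 = ε := by simp [hS_def]
  have hSpos : ∀ t, 0 < S t := by
    intro t
    have := Finset.sum_nonneg fun i (_ : i ∈ Finset.Icc 1 t) => ha i
    simp only [hS_def]
    linarith
  have hGsq : 0 ≤ G := le_trans (Real.sqrt_nonneg _) (hG 1 le_rfl hT)
  have hGa : ∀ t, 1 ≤ t → t ≤ T → a t ≤ G ^ 2 := by
    intro t h1 h2
    have h := hG t h1 h2
    have h0 : 0 ≤ Real.sqrt (a t) := Real.sqrt_nonneg _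
    nlinarith [Real.sq_sqrt (ha t)]
  have hstep : ∀ t, 1 ≤ t → S t = S (t - 1) + a t := by
    intro t ht
    obtain ⟨n, rfl⟩ : ∃ n, t = n + 1 := ⟨t - 1, by omega⟩
    simp only [hS_def]
    rw [Finset.sum_Icc_succ_top (by omega : 1 ≤ n + 1)]
    simp
    ring
  have hST : S T = ε + ∑ t ∈ Finset.Icc 1 T, a t := rfl
  have step1 : ∑ t ∈ Finset.Icc 1 T,
        α * (∑ j, (g t j) ^ 2) /
          Real.sqrt (ε + ∑ i ∈ Finset.Icc 1 (t - 1), ∑ j, (g i j) ^ 2)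
      ≤ ∑ t ∈ Finset.Icc 1 T,
        (α * (2 * (Real.sqrt (S t) - Real.sqrt (S (t - 1))))
          + α * (G ^ 2 * (1 / Real.sqrt (S (t - 1)) - 1 / Real.sqrt (S t)))) := by
    apply Finset.sum_le_sum
    intro t ht
    rw [Finset.mem_Icc] at ht
    have hterm := term_aux (S (t - 1)) (a t) G (hSpos _) (ha t) (hGa t ht.1 ht.2)
    rw [← hstep t ht.1] at hterm
    have hden : (ε + ∑ i ∈ Finset.Icc 1 (t - 1), ∑ j, (g i j) ^ 2) = S (t - 1) := rfl
    rw [hden, mul_div_assoc]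
    calc α * ((∑ j, (g t j) ^ 2) / Real.sqrt (S (t - 1)))
        ≤ α * (2 * (Real.sqrt (S t) - Real.sqrt (S (t - 1)))
            + G ^ 2 * (1 / Real.sqrt (S (t - 1)) - 1 / Real.sqrt (S t))) :=
          mul_le_mul_of_nonneg_left hterm hα.le
      _ = _ := by ring
  have step2 : ∑ t ∈ Finset.Icc 1 T,
        (α * (2 * (Real.sqrt (S t) - Real.sqrt (S (t - 1))))
          + α * (G ^ 2 * (1 / Real.sqrt (S (t - 1)) - 1 / Real.sqrt (S t))))
      = α * 2 * (Real.sqrt (S T) - Real.sqrt (S 0))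
        - α * G ^ 2 * (1 / Real.sqrt (S T) - 1 / Real.sqrt (S 0)) := by
    rw [Finset.sum_add_distrib]
    have h1 : ∑ t ∈ Finset.Icc 1 T, α * (2 * (Real.sqrt (S t) - Real.sqrt (S (t - 1))))
        = α * 2 * (Real.sqrt (S T) - Real.sqrt (S 0)) := by
      rw [← tele_aux (fun t => Real.sqrt (S t)) T, Finset.mul_sum]
      apply Finset.sum_congr rfl
      intro t _
      ring
    have h2 : ∑ t ∈ Finset.Icc 1 T, α * (G ^ 2 * (1 / Real.sqrt (S (t - 1)) - 1 / Real.sqrt (S t)))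
        = - (α * G ^ 2 * (1 / Real.sqrt (S T) - 1 / Real.sqrt (S 0))) := by
      have htel := tele_aux (fun t => 1 / Real.sqrt (S t)) T
      calc ∑ t ∈ Finset.Icc 1 T,
            α * (G ^ 2 * (1 / Real.sqrt (S (t - 1)) - 1 / Real.sqrt (S t)))
          = (-(α * G ^ 2)) * ∑ t ∈ Finset.Icc 1 T,
              ((fun t => 1 / Real.sqrt (S t)) t - (fun t => 1 / Real.sqrt (S t)) (t - 1)) := by
            rw [Finset.mul_sum]
            apply Finset.sum_congr rfl
            intro t _
            simp only
            ring
        _ = - (α * G ^ 2 * (1 / Real.sqrt (S T) - 1 / Real.sqrt (S 0))) := by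
            rw [htel]; ring
    rw [h1, h2]
    ring
  have hSigma : 0 ≤ ∑ t ∈ Finset.Icc 1 T, a t :=
    Finset.sum_nonneg fun t _ => ha t
  have hsplit : Real.sqrt (S T) - Real.sqrt ε ≤ Real.sqrt (∑ t ∈ Finset.Icc 1 T, a t) := by
    have hsum : S T ≤ (Real.sqrt ε + Real.sqrt (∑ t ∈ Finset.Icc 1 T, a t)) ^ 2 := by
      rw [hST]
      nlinarith [Real.sq_sqrt hε.le, Real.sq_sqrt hSigma,
        mul_nonneg (Real.sqrt_nonneg ε) (Real.sqrt_nonneg (∑ t ∈ Finset.Icc 1 T, a t))]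
    have := Real.sqrt_le_sqrt hsum
    rw [Real.sqrt_sq (by positivity)] at this
    linarith
  have hsε : 0 < Real.sqrt ε := Real.sqrt_pos.2 hε
  have hsT : 0 < Real.sqrt (S T) := Real.sqrt_pos.2 (hSpos T)
  have hrecip : 0 ≤ 1 / Real.sqrt (S T) := by positivity
  have hdiv : α * G ^ 2 / Real.sqrt ε = α * G ^ 2 * (1 / Real.sqrt ε) := by ring
  rw [hS0] at step2
  calc ∑ t ∈ Finset.Icc 1 T,
        α * (∑ j, (g t j) ^ 2) /
          Real.sqrt (ε + ∑ i ∈ Finset.Icc 1 (t - 1), ∑ j, (g i j) ^ 2)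
      ≤ α * 2 * (Real.sqrt (S T) - Real.sqrt ε)
        - α * G ^ 2 * (1 / Real.sqrt (S T) - 1 / Real.sqrt ε) := by
        rw [← step2]; exact step1
    _ ≤ 2 * α * Real.sqrt (∑ t ∈ Finset.Icc 1 T, a t) + α * G ^ 2 / Real.sqrt ε := by
        rw [hdiv]
        nlinarith [mul_le_mul_of_nonneg_left hsplit (by positivity : (0:ℝ) ≤ 2 * α),
          mul_nonneg (mul_nonneg hα.le (sq_nonneg G)) hrecip]
end

section
/- Coordinate-wise AdaGrad-type sum bound: let g_1, …, g_T ∈ ℝ^d satisfy ‖g_t‖_∞ ≤ G_∞ for all t, and let ε > 0 and α > 0. Then Σ_{j=1}^{d} Σ_{t=1}^{T} α·g_{t,j}² / √(ε + Σ_{i=1}^{t−1} g_{i,j}²) ≤ 2α·Σ_{j=1}^{d} √(Σ_{t=1}^{T} g_{t,j}²) + α·d·G_∞²/√ε. -/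
private lemma key_alg (x y G2 : ℝ) (hx : 0 < x) (hxy : x ≤ y) (hG : y^2 - x^2 ≤ G2) :
    (y^2 - x^2)/x ≤ 2*(y-x) + G2*(1/x - 1/y) := by
  have hy : 0 < y := lt_of_lt_of_le hx hxy
  have h1 : y*(y-x) ≤ y^2 - x^2 := by nlinarith [mul_nonneg hx.le (sub_nonneg.2 hxy)]
  have h5 : y*(y-x) ≤ G2 := le_trans h1 hG
  have e : 2*(y-x) + G2*(1/x - 1/y) - (y^2-x^2)/x = (G2 - y*(y-x))*(y-x)/(x*y) := by
    field_simp; ring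
  have hnn : 0 ≤ (G2 - y*(y-x))*(y-x)/(x*y) :=
    div_nonneg (mul_nonneg (by linarith) (by linarith)) (by positivity)
  linarith [e, hnn]

private lemma tele (f : ℕ → ℝ) (T : ℕ) :
    ∑ t ∈ Finset.Icc 1 T, (f t - f (t-1)) = f T - f 0 := by
  induction T with
  | zero => simp
  | succ n ih =>
    rw [Finset.sum_Icc_succ_top (by omega : 1 ≤ n + 1), ih]
    simp only [Nat.add_sub_cancel]
    ring

private lemma coord_bound (T : ℕ) (h : ℕ → ℝ) (Ginf ε : ℝ) (hε : 0 < ε)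
    (hG : ∀ t, 1 ≤ t → t ≤ T → (h t)^2 ≤ Ginf^2) :
    ∑ t ∈ Finset.Icc 1 T, (h t)^2 / Real.sqrt (ε + ∑ i ∈ Finset.Icc 1 (t-1), (h i)^2)
      ≤ 2 * Real.sqrt (∑ t ∈ Finset.Icc 1 T, (h t)^2) + Ginf^2 / Real.sqrt ε := by
  set F : ℕ → ℝ := fun t => Real.sqrt (ε + ∑ i ∈ Finset.Icc 1 t, (h i)^2) with hF
  have hSnn : ∀ t : ℕ, 0 ≤ ∑ i ∈ Finset.Icc 1 t, (h i)^2 :=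
    fun t => Finset.sum_nonneg (fun i _ => sq_nonneg _)
  have hεS : ∀ t : ℕ, 0 < ε + ∑ i ∈ Finset.Icc 1 t, (h i)^2 :=
    fun t => by have := hSnn t; linarith
  have hFpos : ∀ t, 0 < F t := fun t => Real.sqrt_pos.2 (hεS t)
  have hFsq : ∀ t, (F t)^2 = ε + ∑ i ∈ Finset.Icc 1 t, (h i)^2 :=
    fun t => Real.sq_sqrt (le_of_lt (hεS t))
  have hFmono : ∀ s t : ℕ, s ≤ t → F s ≤ F t := by
    intro s t hst
    apply Real.sqrt_le_sqrt
    have hsub : (Finset.Icc 1 s) ⊆ (Finset.Icc 1 t) := Finset.Icc_subset_Icc_right hst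
    have := Finset.sum_le_sum_of_subset_of_nonneg hsub (fun i _ _ => sq_nonneg (h i))
    linarith
  have hterm : ∀ t ∈ Finset.Icc 1 T,
      (h t)^2 / F (t-1) ≤ 2*(F t - F (t-1)) + Ginf^2*(1/F (t-1) - 1/F t) := by
    intro t ht
    rw [Finset.mem_Icc] at ht
    obtain ⟨ht1, ht2⟩ := ht
    have hsplit : (F t)^2 - (F (t-1))^2 = (h t)^2 := by
      rw [hFsq, hFsq]
      have heq : t = (t-1) + 1 := (Nat.succ_pred_eq_of_pos ht1).symm
      rw [heq, Finset.sum_Icc_succ_top (by omega : 1 ≤ t - 1 + 1)]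
      rw [← heq]; ring
    have := key_alg (F (t-1)) (F t) (Ginf^2) (hFpos (t-1)) (hFmono _ _ (by omega))
      (by rw [hsplit]; exact hG t ht1 ht2)
    rw [hsplit] at this
    exact this
  calc ∑ t ∈ Finset.Icc 1 T, (h t)^2 / F (t-1)
      ≤ ∑ t ∈ Finset.Icc 1 T, (2*(F t - F (t-1)) + Ginf^2*(1/F (t-1) - 1/F t)) :=
        Finset.sum_le_sum hterm
    _ = 2 * (∑ t ∈ Finset.Icc 1 T, (F t - F (t-1)))
        + Ginf^2 * (∑ t ∈ Finset.Icc 1 T, (1/F (t-1) - 1/F t)) := by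
        rw [Finset.sum_add_distrib, Finset.mul_sum, Finset.mul_sum]
    _ = 2 * (F T - F 0) + Ginf^2 * (1/F 0 - 1/F T) := by
        have t1 : ∑ t ∈ Finset.Icc 1 T, (F t - F (t-1)) = F T - F 0 := tele F T
        have t2 : ∑ t ∈ Finset.Icc 1 T, (1/F (t-1) - 1/F t) = 1/F 0 - 1/F T := by
          have := tele (fun k => -(1/F k)) T
          simp only [neg_sub_neg] at this
          rw [this]
        rw [t1, t2]
    _ ≤ 2 * Real.sqrt (∑ t ∈ Finset.Icc 1 T, (h t)^2) + Ginf^2 / Real.sqrt ε := by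
        have hF0 : F 0 = Real.sqrt ε := by simp [hF]
        have h1 : F T - F 0 ≤ Real.sqrt (∑ t ∈ Finset.Icc 1 T, (h t)^2) := by
          rw [hF0]
          set S := ∑ t ∈ Finset.Icc 1 T, (h t)^2 with hS
          have hs1 : Real.sqrt (ε + S) ≤ Real.sqrt ((Real.sqrt ε + Real.sqrt S)^2) := by
            apply Real.sqrt_le_sqrt
            have a1 := Real.sq_sqrt hε.le
            have a2 := Real.sq_sqrt (hSnn T)
            rw [← hS] at a2
            nlinarith [mul_nonneg (Real.sqrt_nonneg ε) (Real.sqrt_nonneg S)]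
          rw [Real.sqrt_sq (by positivity)] at hs1
          simp only [hF]
          linarith
        have h2 : 1/F 0 - 1/F T ≤ 1/Real.sqrt ε := by
          rw [hF0]
          have hpos : 0 < 1/F T := by positivity
          linarith
        have hG2 : (0:ℝ) ≤ Ginf^2 := sq_nonneg _
        have h3 := mul_le_mul_of_nonneg_left h2 hG2
        have h4 : Ginf^2 / Real.sqrt ε = Ginf^2 * (1/Real.sqrt ε) := by ring
        linarith

theorem stmt_19
    (T d : ℕ) (hT : 1 ≤ T) (hd : 1 ≤ d)
    (g : ℕ → Fin d → ℝ) (Ginf ε α : ℝ) (hε : 0 < ε) (hα : 0 < α)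
    (hG : ∀ t : ℕ, 1 ≤ t → t ≤ T → ∀ j : Fin d, |g t j| ≤ Ginf) :
    ∑ j : Fin d, ∑ t ∈ Finset.Icc 1 T,
        α * (g t j) ^ 2 / Real.sqrt (ε + ∑ i ∈ Finset.Icc 1 (t - 1), (g i j) ^ 2)
      ≤ 2 * α * ∑ j : Fin d, Real.sqrt (∑ t ∈ Finset.Icc 1 T, (g t j) ^ 2)
        + α * (d : ℝ) * Ginf ^ 2 / Real.sqrt ε := by
  have hcoord : ∀ j : Fin d,
      ∑ t ∈ Finset.Icc 1 T, (g t j)^2 / Real.sqrt (ε + ∑ i ∈ Finset.Icc 1 (t-1), (g i j)^2)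
        ≤ 2 * Real.sqrt (∑ t ∈ Finset.Icc 1 T, (g t j)^2) + Ginf^2 / Real.sqrt ε := by
    intro j
    apply coord_bound T (fun t => g t j) Ginf ε hε
    intro t ht1 ht2
    have habs := hG t ht1 ht2 j
    calc (g t j)^2 = |g t j|^2 := (sq_abs _).symm
      _ ≤ Ginf^2 := by nlinarith [abs_nonneg (g t j)]
  have hrw : ∀ j : Fin d, ∑ t ∈ Finset.Icc 1 T,
      α * (g t j) ^ 2 / Real.sqrt (ε + ∑ i ∈ Finset.Icc 1 (t - 1), (g i j) ^ 2)
      = α * ∑ t ∈ Finset.Icc 1 T,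
        (g t j)^2 / Real.sqrt (ε + ∑ i ∈ Finset.Icc 1 (t-1), (g i j)^2) := by
    intro j
    rw [Finset.mul_sum]
    exact Finset.sum_congr rfl (fun t _ => mul_div_assoc _ _ _)
  calc ∑ j : Fin d, ∑ t ∈ Finset.Icc 1 T,
        α * (g t j) ^ 2 / Real.sqrt (ε + ∑ i ∈ Finset.Icc 1 (t - 1), (g i j) ^ 2)
      = α * ∑ j : Fin d, ∑ t ∈ Finset.Icc 1 T,
        (g t j)^2 / Real.sqrt (ε + ∑ i ∈ Finset.Icc 1 (t-1), (g i j)^2) := by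
        rw [Finset.mul_sum]; exact Finset.sum_congr rfl (fun j _ => hrw j)
    _ ≤ α * ∑ j : Fin d,
        (2 * Real.sqrt (∑ t ∈ Finset.Icc 1 T, (g t j)^2) + Ginf^2 / Real.sqrt ε) := by
        exact mul_le_mul_of_nonneg_left
          (Finset.sum_le_sum (fun j _ => hcoord j)) (le_of_lt hα)
    _ = 2 * α * (∑ j : Fin d, Real.sqrt (∑ t ∈ Finset.Icc 1 T, (g t j)^2))
        + α * (d : ℝ) * Ginf^2 / Real.sqrt ε := by
        rw [Finset.sum_add_distrib, Finset.sum_const, Finset.card_univ, Fintype.card_fin,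
          ← Finset.mul_sum, mul_add]
        have hsε : Real.sqrt ε ≠ 0 := ne_of_gt (Real.sqrt_pos.2 hε)
        field_simp
        rw [nsmul_eq_mul]
        linear_combination (Ginf^2 * (d:ℝ)) * mul_inv_cancel₀ hsε
end
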